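/- Let T be a set of universal first-order L-sentences and suppose that the set Int^T(X) of interpretations of L on X satisfying every sentence of T is nonempty. Then for every M ∈ Int^T(X) there exists a maximal element N of (Int^T(X), ⊆) with M ⊆ N, and every such maximal element N is a reversible interpretation. -/

import Mathlib

open FirstOrder

/-- An interpretation of the relational language `L` on the set `X`: an assignment of an
`n`-ary relation on `X` to each `n`-ary relation symbol of `L`. -/
def Interp (L : FirstOrder.Language) (X : Type*) : Type _ :=
  ∀ n : ℕ, L.Relations n → Set (Fin n → X)

namespace Interp

variable {L : FirstOrder.Language} {X : Type*}

/-- The `L`-structure with universe `X` determined by an interpretation. -/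
def str [L.IsRelational] (ρ : Interp L X) : L.Structure X where
  funMap := fun {_} f _ => isEmptyElim f
  RelMap := fun {n} r x => x ∈ ρ n r

/-- `ρ` satisfies the `L`-sentence `φ` (as a structure with universe `X`). -/
def Models [L.IsRelational] (ρ : Interp L X) (φ : L.Sentence) : Prop :=
  @FirstOrder.Language.Sentence.Realize L X ρ.str φ

/-- `ρ ⊆ σ`: every relation of `ρ` is contained in the corresponding relation of `σ`. -/
def le (ρ σ : Interp L X) : Prop := ∀ n (r : L.Relations n), ρ n r ⊆ σ n r

/-- The image `g[ρ]` of an interpretation under a bijection `g` of `X`: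
`r(x)` holds in `g[ρ]` iff `r(g⁻¹ ∘ x)` holds in `ρ`. -/
def img (g : X ≃ X) (ρ : Interp L X) : Interp L X :=
  fun n r => {x | (fun k => g.symm (x k)) ∈ ρ n r}

/-- A set of interpretations is isomorphism-invariant iff it is closed under
images by bijections of `X`. -/
def IsoInvariant (C : Set (Interp L X)) : Prop :=
  ∀ ρ ∈ C, ∀ g : X ≃ X, img g ρ ∈ C

/-- An interpretation is reversible iff every bijective homomorphism from it to itself
is an automorphism. -/
def Reversible (ρ : Interp L X) : Prop :=
  ∀ f : X ≃ X,
    (∀ n (r : L.Relations n), ∀ x ∈ ρ n r, (fun k => f (x k)) ∈ ρ n r) →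
    ∀ n (r : L.Relations n), ∀ x : Fin n → X, x ∈ ρ n r ↔ (fun k => f (x k)) ∈ ρ n r

/-- `τ` is a maximal element of `C` with respect to `⊆`. -/
def MaxIn (C : Set (Interp L X)) (τ : Interp L X) : Prop :=
  τ ∈ C ∧ ¬∃ σ ∈ C, le τ σ ∧ τ ≠ σ

/-- `τ` is a minimal element of `C` with respect to `⊆`. -/
def MinIn (C : Set (Interp L X)) (τ : Interp L X) : Prop :=
  τ ∈ C ∧ ¬∃ σ ∈ C, le σ τ ∧ σ ≠ τ

end Interp

/-- The set `Int^T(X)` of all interpretations of `L` on `X` satisfying every sentence of `T`. -/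
def IntT (L : FirstOrder.Language) [L.IsRelational] (X : Type*) (T : L.Theory) :
    Set (Interp L X) :=
  {ρ | ∀ φ ∈ T, ρ.Models φ}

/-- A first-order sentence is universal iff it is of the form `∀ v₁ … ∀ v_k, ψ`
with `ψ` quantifier-free. -/
def IsUniversalSentence {L : FirstOrder.Language} (φ : L.Sentence) : Prop :=
  ∃ (k : ℕ) (ψ : L.BoundedFormula Empty k), ψ.IsQF ∧ φ = ψ.alls

/-!
A universal sentence holds in the union of a chain of its models: at a fixed tuple, each of the
finitely many atoms of its quantifier-free matrix has stabilised from some member of the chain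
on, so the matrix is true in the union because it is true in that member. Zorn's lemma then
gives maximal models above every model. If `N` is maximal and the bijection `f` maps `N` into
itself, then `N` is contained in the image of `N` under `f⁻¹`, which is again a model; by
maximality the two are equal, which says that `f` also reflects every relation.
-/

open Filter FirstOrder.Language

namespace Interp

variable {L : FirstOrder.Language} {X : Type*}

-- The order of this lattice is `Interp.le`, up to unfolding.
instance : CompleteLattice (Interp L X) :=
  inferInstanceAs (CompleteLattice (∀ n : ℕ, L.Relations n → Set (Fin n → X)))

theorem iSup_apply_apply {ι : Type*} (s : ι → Interp L X) (n : ℕ) (r : L.Relations n) :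
    (⨆ i, s i) n r = ⋃ i, s i n r :=
  (congrFun (iSup_apply (β := fun n => L.Relations n → Set (Fin n → X)) (f := s)) r).trans
    (iSup_apply ..)

theorem maxIn_iff_maximal {C : Set (Interp L X)} {τ : Interp L X} :
    MaxIn C τ ↔ Maximal (· ∈ C) τ := by
  refine and_congr_right fun _ => ⟨fun h σ hσ hτσ => ?_, fun h ⟨σ, hσ, hτσ, hne⟩ => ?_⟩
  · by_contra hστ
    exact h ⟨σ, hσ, hτσ, ne_of_lt (lt_of_le_not_ge hτσ hστ)⟩
  · exact hne (le_antisymm hτσ (h hσ hτσ))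

theorem reversible_of_maxIn {C : Set (Interp L X)} (hC : IsoInvariant C) {N : Interp L X}
    (hN : MaxIn C N) : Reversible N := by
  intro f hf n r x
  have hle : N ≤ img f.symm N := hf
  have heq : N = img f.symm N := (maxIn_iff_maximal.1 hN).eq_of_le (hC N hN.1 f.symm) hle
  refine ⟨hf n r x, fun hx => ?_⟩
  rw [heq]
  simpa [img] using hx

variable [L.IsRelational]

theorem realize_term_eq (ρ σ : Interp L X) {α : Type*} (v : α → X) (t : L.Term α) :
    @Term.realize L X ρ.str α v t = @Term.realize L X σ.str α v t := by
  cases t with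
  | var => rfl
  | func f _ => exact isEmptyElim f

theorem eventually_realize_iff_iSup {ι : Type*} [Preorder ι] {s : ι → Interp L X}
    (hs : Monotone s) {α : Type*} {k : ℕ} {ψ : L.BoundedFormula α k} (hψ : ψ.IsQF)
    (v : α → X) (xs : Fin k → X) :
    ∀ᶠ i in atTop, (@BoundedFormula.Realize L X (s i).str α k ψ v xs ↔
      @BoundedFormula.Realize L X (⨆ i, s i).str α k ψ v xs) := by
  induction hψ with
  | falsum => exact Eventually.of_forall fun _ => Iff.rfl
  | of_isAtomic ha =>
    cases ha with
    | equal t₁ t₂ =>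
      refine Eventually.of_forall fun i => ?_
      show (_ = _) ↔ (_ = _)
      rw [realize_term_eq (s i) (⨆ i, s i), realize_term_eq (s i) (⨆ i, s i)]
    | @rel l R ts =>
      show ∀ᶠ i in atTop, ((fun j => @Term.realize L X (s i).str _ _ (ts j)) ∈ s i l R ↔
        (fun j => @Term.realize L X (⨆ i, s i).str _ _ (ts j)) ∈ (⨆ i, s i) l R)
      simp only [realize_term_eq _ (⨆ i, s i)]
      by_cases hx : (fun j => @Term.realize L X (⨆ i, s i).str _ (Sum.elim v xs) (ts j)) ∈
          (⨆ i, s i) l R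
      · obtain ⟨i, hi⟩ := Set.mem_iUnion.1 (iSup_apply_apply s l R ▸ hx)
        filter_upwards [eventually_ge_atTop i] with j hij
        exact iff_of_true (hs hij l R hi) hx
      · exact Eventually.of_forall fun i => iff_of_false
          (fun h => hx (le_iSup s i l R h)) hx
  | imp _ _ ih₁ ih₂ =>
    filter_upwards [ih₁, ih₂] with i h₁ h₂
    exact imp_congr h₁ h₂

theorem models_alls_iff (ρ : Interp L X) {k : ℕ} (ψ : L.BoundedFormula Empty k) :
    ρ.Models ψ.alls ↔ ∀ xs, @BoundedFormula.Realize L X ρ.str Empty k ψ default xs :=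
  letI := ρ.str
  BoundedFormula.realize_alls

theorem models_iSup {ι : Type*} [Preorder ι] [Nonempty ι] [IsDirectedOrder ι]
    {s : ι → Interp L X} (hs : Monotone s) {φ : L.Sentence} (hφ : IsUniversalSentence φ)
    (h : ∀ i, (s i).Models φ) : (⨆ i, s i).Models φ := by
  obtain ⟨k, ψ, hψ, rfl⟩ := hφ
  refine (models_alls_iff _ ψ).2 fun xs => ?_
  obtain ⟨i, hi⟩ := (eventually_realize_iff_iSup hs hψ default xs).exists
  exact hi.1 ((models_alls_iff _ ψ).1 (h i) xs)

theorem sSup_mem_intT {T : L.Theory} (hT : ∀ φ ∈ T, IsUniversalSentence φ)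
    {c : Set (Interp L X)} (hcT : c ⊆ IntT L X T) (hc : IsChain (· ≤ ·) c) (hne : c.Nonempty) :
    sSup c ∈ IntT L X T := by
  have : Nonempty c := hne.to_subtype
  have : IsDirectedOrder c := hc.directedOn.isDirectedOrder
  rw [sSup_eq_iSup']
  exact fun φ hφ => models_iSup (Subtype.mono_coe (· ∈ c)) (hT φ hφ) fun i => hcT i.2 φ hφ

theorem models_img (g : X ≃ X) (ρ : Interp L X) (φ : L.Sentence) :
    (img g ρ).Models φ ↔ ρ.Models φ :=
  let e := @Language.Equiv.mk L X X ρ.str (img g ρ).str g (fun f => isEmptyElim f)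
    fun {n} r x => show (fun i => g.symm (g (x i))) ∈ ρ n r ↔ x ∈ ρ n r by
      simp only [Equiv.symm_apply_apply]
  (@StrongHomClass.realize_sentence L X X ρ.str (img g ρ).str _ _ _ e φ).symm

theorem isoInvariant_intT (T : L.Theory) : IsoInvariant (IntT L X T) :=
  fun ρ hρ g φ hφ => (models_img g ρ φ).2 (hρ φ hφ)

end Interp

theorem stmt_5_general (L : FirstOrder.Language) [L.IsRelational] (X : Type*)
    (T : L.Theory) (hT : ∀ φ ∈ T, IsUniversalSentence φ) :
    (∀ M ∈ IntT L X T, ∃ N, Interp.MaxIn (IntT L X T) N ∧ Interp.le M N) ∧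
    (∀ N, Interp.MaxIn (IntT L X T) N → Interp.Reversible N) := by
  refine ⟨fun M hM => ?_, fun N hN => Interp.reversible_of_maxIn (Interp.isoInvariant_intT T) hN⟩
  obtain ⟨N, hMN, hN⟩ := zorn_le_nonempty₀ (IntT L X T)
    (fun c hcT hc y hy => ⟨sSup c, Interp.sSup_mem_intT hT hcT hc ⟨y, hy⟩, fun _ => le_sSup⟩) M hM
  exact ⟨N, Interp.maxIn_iff_maximal.2 hN, hMN⟩

/-- If `T` is a set of universal first-order `L`-sentences and `Int^T(X)` is nonempty, then
above every member of `Int^T(X)` there is a maximal element of `(Int^T(X), ⊆)`, and every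
maximal element of `Int^T(X)` is a reversible interpretation. -/
theorem stmt_5 (L : FirstOrder.Language) [L.IsRelational] (X : Type*) [Nonempty X]
    (T : L.Theory) (hT : ∀ φ ∈ T, IsUniversalSentence φ)
    (hne : (IntT L X T).Nonempty) :
    (∀ M ∈ IntT L X T, ∃ N, Interp.MaxIn (IntT L X T) N ∧ Interp.le M N) ∧
    (∀ N, Interp.MaxIn (IntT L X T) N → Interp.Reversible N) :=
  stmt_5_general L X T hT
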